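/- arXiv:2112.04416 — 2 statements merged into one kernel-verified Lean document; each statement's English description precedes it below -/
import Mathlib

section
/- For the Thue–Morse word t, if i is an odd natural number and t is the natural number with 2^t ≤ i < 2^{t+1}, then the periodicity function satisfies p_t(i) = 3 · 2^t. -/
open Finset Filter Asymptotics

/-- `n` is a local period of the infinite word `w` at position `i`:
`n ≥ 1` and either (`n ≤ i` and `w_{i+k} = w_{i-n+k}` for all `k < n`)
or (`n > i` and `w_k = w_{n+k}` for all `k < i`). -/
def IsLocalPeriodAt {α : Type*} (w : ℕ → α) (i n : ℕ) : Prop :=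
  1 ≤ n ∧ ((n ≤ i ∧ ∀ k < n, w (i + k) = w (i - n + k)) ∨
           (i < n ∧ ∀ k < i, w k = w (n + k)))

/-- The periodicity function `p_w(i)`: the least local period of `w` at `i`. -/
noncomputable def perFn {α : Type*} (w : ℕ → α) (i : ℕ) : ℕ :=
  sInf {n | IsLocalPeriodAt w i n}

/-- The summatory function `P_w(n) = ∑_{j<n} p_w(j)`. -/
noncomputable def sumFn {α : Type*} (w : ℕ → α) (n : ℕ) : ℕ :=
  ∑ j ∈ Finset.range n, perFn w j

/-- The periodic complexity `h_w(n) = P_w(n)/n`. -/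
noncomputable def perComplexity {α : Type*} (w : ℕ → α) (n : ℕ) : ℝ :=
  (sumFn w n : ℝ) / n

/-- The Thue–Morse word: `t_i = 0` iff the number of 1's in the binary
representation of `i` is even. -/
def tm (i : ℕ) : ℕ :=
  if Even ((Nat.digits 2 i).count 1) then 0 else 1


/-! The Thue–Morse word has no square whose center is odd. For a square of odd length this is
because `tm (2q) ≠ tm (2q + 1)` forces both halves to alternate, which breaks at the center; a
square of even length `2m` with odd center starts at an odd position, so reading only its odd
positions and applying `tm (2q + 1) = 1 - tm q` gives a square of length `m`, one of whose two
neighboring shifts again has odd center. Hence no local period `n ≤ i` exists at odd `i`.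
A local period `n > i` means the prefix of length `i` reappears at `n`; such an `n` is even, and
halving both `i` and `n` reduces `t`, so `n ≥ 3 · 2^t`. Conversely `3 · 2^t` is a local period,
since the word agrees with itself shifted by `3 · 2^t` on the first `2^(t+1)` letters. -/

lemma tm_zero : tm 0 = 0 := by simp [tm]

lemma tm_two_mul (q : ℕ) : tm (2 * q) = tm q := by
  rcases Nat.eq_zero_or_pos q with rfl | hq
  · rfl
  · unfold tm
    rw [Nat.digits_def' (by norm_num) (by omega)]
    simp

lemma tm_two_mul_add_one (q : ℕ) : tm (2 * q + 1) = 1 - tm q := by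
  unfold tm
  rw [Nat.digits_def' (by norm_num) (by omega), show (2 * q + 1) % 2 = 1 by omega,
    show (2 * q + 1) / 2 = q by omega]
  by_cases h : Even ((Nat.digits 2 q).count 1) <;> simp [Nat.even_add_one, h]

lemma tm_le_one (k : ℕ) : tm k ≤ 1 := by
  unfold tm
  split <;> simp

lemma tm_one : tm 1 = 1 := by
  simpa [tm_zero] using tm_two_mul_add_one 0

lemma tm_two_mul_ne_tm_two_mul_add_one (q : ℕ) : tm (2 * q) ≠ tm (2 * q + 1) := by
  rw [tm_two_mul, tm_two_mul_add_one]
  have := tm_le_one q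
  omega

lemma odd_of_tm_eq_tm_succ {j : ℕ} (h : tm j = tm (j + 1)) : Odd j := by
  rcases Nat.even_or_odd' j with ⟨q, rfl | rfl⟩
  · exact absurd h (tm_two_mul_ne_tm_two_mul_add_one q)
  · exact odd_two_mul_add_one q

lemma tm_eq_of_tm_two_mul_add_one_eq {q r : ℕ} (h : tm (2 * q + 1) = tm (2 * r + 1)) :
    tm q = tm r := by
  rw [tm_two_mul_add_one, tm_two_mul_add_one] at h
  have := tm_le_one q
  have := tm_le_one r
  omega

lemma tm_eq_of_ne_of_ne {a b c : ℕ} (hab : tm a ≠ tm b) (hbc : tm b ≠ tm c) : tm a = tm c := by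
  have := tm_le_one a
  have := tm_le_one b
  have := tm_le_one c
  omega

lemma tm_three_mul_two_pow_add {t k : ℕ} (hk : k < 2 ^ (t + 1)) : tm (3 * 2 ^ t + k) = tm k := by
  induction t generalizing k with
  | zero =>
    interval_cases k
    · rw [show 3 * 2 ^ 0 + 0 = 2 * 1 + 1 by norm_num, tm_two_mul_add_one, tm_one, tm_zero]
    · rw [show 3 * 2 ^ 0 + 1 = 2 * (2 * 1) by norm_num, tm_two_mul, tm_two_mul]
  | succ t ih =>
    rw [pow_succ] at hk
    rcases Nat.even_or_odd' k with ⟨k, rfl | rfl⟩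
    · rw [show 3 * 2 ^ (t + 1) + 2 * k = 2 * (3 * 2 ^ t + k) by ring, tm_two_mul, tm_two_mul,
        ih (by omega)]
    · rw [show 3 * 2 ^ (t + 1) + (2 * k + 1) = 2 * (3 * 2 ^ t + k) + 1 by ring,
        tm_two_mul_add_one, tm_two_mul_add_one, ih (by omega)]

lemma tm_not_square_of_odd_length {p n : ℕ} (hp : Even p) (hn : Odd n)
    (H : ∀ k < n, tm (p + k) = tm (p + n + k)) : False := by
  obtain ⟨P, rfl⟩ : ∃ P, p = 2 * P := hp.exists_two_nsmul
  obtain ⟨m, rfl⟩ := hn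
  have alternates : ∀ j ≤ m, tm (2 * (P + j)) = tm (2 * P) := by
    intro j
    induction j with
    | zero => intro _; rfl
    | succ j ih =>
      intro hj
      -- the step `2(P + j) + 1 → 2(P + j + 1)` is copied from the aligned pair `2(P + m + j + 1)`,
      -- `2(P + m + j + 1) + 1` of the second half
      have hstep : tm (2 * (P + j) + 1) ≠ tm (2 * (P + j + 1)) := by
        have h₁ := H (2 * j + 1) (by omega)
        have h₂ := H (2 * j + 2) (by omega)
        rw [show 2 * P + (2 * j + 1) = 2 * (P + j) + 1 by ring,
          show 2 * P + (2 * m + 1) + (2 * j + 1) = 2 * (P + m + j + 1) by ring] at h₁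
        rw [show 2 * P + (2 * j + 2) = 2 * (P + j + 1) by ring,
          show 2 * P + (2 * m + 1) + (2 * j + 2) = 2 * (P + m + j + 1) + 1 by ring] at h₂
        rw [h₁, h₂]
        exact tm_two_mul_ne_tm_two_mul_add_one _
      rw [← ih (by omega)]
      exact (tm_eq_of_ne_of_ne (tm_two_mul_ne_tm_two_mul_add_one _) hstep).symm
  have hcenter := H 0 (by omega)
  rw [add_zero, add_zero, ← alternates m le_rfl, show 2 * P + (2 * m + 1) = 2 * (P + m) + 1 by ring]
    at hcenter
  exact tm_two_mul_ne_tm_two_mul_add_one _ hcenter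

lemma tm_square_halve {P m : ℕ}
    (H : ∀ k < 2 * m, tm (2 * P + 1 + k) = tm (2 * P + 1 + 2 * m + k)) :
    ∀ k ≤ m, tm (P + k) = tm (P + m + k) := by
  intro k hk
  obtain rfl | hm := Nat.eq_zero_or_pos m
  · simp
  rcases hk.lt_or_eq with hk | rfl
  · have h := H (2 * k) (by omega)
    rw [show 2 * P + 1 + 2 * k = 2 * (P + k) + 1 by ring,
      show 2 * P + 1 + 2 * m + 2 * k = 2 * (P + m + k) + 1 by ring] at h
    exact tm_eq_of_tm_two_mul_add_one_eq h
  · have h := H (2 * k - 1) (by omega)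
    rw [show 2 * P + 1 + (2 * k - 1) = 2 * (P + k) by omega,
      show 2 * P + 1 + 2 * k + (2 * k - 1) = 2 * (P + k + k) by omega, tm_two_mul, tm_two_mul] at h
    exact h

theorem tm_not_square_of_odd_center {n p : ℕ} (hn : 0 < n) (hc : Odd (p + n))
    (H : ∀ k < n, tm (p + k) = tm (p + n + k)) : False := by
  induction n using Nat.strong_induction_on generalizing p with
  | _ n ih =>
  rcases Nat.even_or_odd n with ⟨m, rfl⟩ | hn'
  · obtain ⟨P, rfl⟩ : ∃ P, p = 2 * P + 1 := by
      obtain ⟨r, hr⟩ := hc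
      exact ⟨p / 2, by omega⟩
    have half := tm_square_halve (P := P) (m := m) (by rw [two_mul]; exact H)
    rcases Nat.even_or_odd (P + m) with ⟨r, hr⟩ | hPm
    · refine ih m (by omega) (p := P + 1) (by omega) ⟨r, by omega⟩ fun k hk => ?_
      rw [show P + 1 + k = P + (k + 1) by ring, show P + 1 + m + k = P + m + (k + 1) by ring]
      exact half (k + 1) hk
    · exact ih m (by omega) (by omega) hPm fun k hk => half k hk.le
  · have hp : Even p := by
      rcases hc with ⟨a, ha⟩
      rcases hn' with ⟨b, hb⟩
      exact ⟨a - b, by omega⟩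
    exact tm_not_square_of_odd_length hp hn' H

theorem tm_odd_prefix_not_occurs_lt_three_mul_two_pow {t i n : ℕ} (hi : Odd i) (h1 : 2 ^ t ≤ i)
    (h2 : i < 2 ^ (t + 1)) (hin : i ≤ n) (hn : n < 3 * 2 ^ t) : ¬ ∀ k < i, tm k = tm (n + k) := by
  intro H
  induction t generalizing i n with
  | zero =>
    obtain rfl : i = 1 := by simp at h1 h2; omega
    have h := H 0 one_pos
    obtain rfl | rfl : n = 1 ∨ n = 2 := by omega
    · simp [tm_zero, tm_one] at h
    · rw [show 2 + 0 = 2 * 1 by rfl, tm_two_mul, tm_one, tm_zero] at h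
      exact zero_ne_one h
  | succ t ih =>
    rw [pow_succ] at h1 h2 hn
    have := Nat.one_le_two_pow (n := t)
    obtain ⟨s, rfl⟩ := hi
    -- `tm 1 = tm 2` is copied to position `n + 1`, which must therefore be odd
    have hn_even : Even n := by
      have h := (H 1 (by omega)).symm.trans ((tm_two_mul 1).symm.trans (H 2 (by omega)))
      exact Nat.not_odd_iff_even.mp (Nat.odd_add_one.mp (odd_of_tm_eq_tm_succ h))
    obtain ⟨n', rfl⟩ : ∃ n', n = 2 * n' := hn_even.exists_two_nsmul
    have half : ∀ k ≤ s, tm k = tm (n' + k) := fun k hk => by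
      have h := H (2 * k) (by omega)
      rwa [tm_two_mul, show 2 * n' + 2 * k = 2 * (n' + k) by ring, tm_two_mul] at h
    rcases Nat.even_or_odd s with ⟨r, hr⟩ | hs
    · exact ih (i := s + 1) ⟨r, by omega⟩ (by omega) (by omega) (by omega) (by omega)
        fun k hk => half k (by omega)
    · exact ih hs (by omega) (by omega) (by omega) (by omega) fun k hk => half k hk.le

theorem tm_perFn_odd (i t : ℕ) (hi : Odd i) (h1 : 2 ^ t ≤ i) (h2 : i < 2 ^ (t + 1)) :
    perFn tm i = 3 * 2 ^ t := by
  have hpow : (2 : ℕ) ^ (t + 1) = 2 * 2 ^ t := pow_succ' 2 t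
  refine IsLeast.csInf_eq ⟨⟨by omega, Or.inr ⟨by omega, fun k hk => ?_⟩⟩, ?_⟩
  · exact (tm_three_mul_two_pow_add (by omega)).symm
  rintro n ⟨hn, ⟨hni, hsquare⟩ | ⟨hin, hprefix⟩⟩
  · refine (tm_not_square_of_odd_center (p := i - n) hn (by rwa [Nat.sub_add_cancel hni]) ?_).elim
    intro k hk
    rw [Nat.sub_add_cancel hni]
    exact (hsquare k hk).symm
  · by_contra! hlt
    exact tm_odd_prefix_not_occurs_lt_three_mul_two_pow hi h1 h2 hin.le hlt hprefix
end

section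
/- For all n ≥ 1, the summatory function of the periodicity function of the period-doubling word satisfies ((1/3)log₂ n − 1/18)·n + 4/9 ≤ P_pd(n) ≤ ((4/3)log₂ n + 22/9)·n + 5/9. -/
/-!
Since `pd (2k) = 0` and `pd (2k+1) = 1 - pd k`, the local periods of `pd` at `i ≥ 2` other than
`1` are exactly the doubles of the local periods at `i / 2`. Hence for `j ≥ 1` each of `p (2j)`,
`p (2j+1)` is `1` or `2 p j`, and since `pd` has no factor `11` at most one of them exceeds
`1`. Summing in pairs gives `2 P m + m ≤ P (2m) ≤ 2 P m + 2m` and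
`2 P m + m + 1 ≤ P (2m+1) ≤ 2 P (m+1) + 2m`. The lower bound follows by induction on `n`.
For the upper bound these recursions give `P n ≤ (n - 1)(k + 2)` whenever `2 ≤ n ≤ 2^k`, and
`k = ⌈log₂ n⌉ < log₂ n + 1`.
-/

open Finset Filter Asymptotics

/-- The period-doubling word: `pd_i = 1` iff the 2-adic valuation of `i+1` is odd. -/
def pd (i : ℕ) : ℕ :=
  if Odd ((i + 1).factorization 2) then 1 else 0
section LocalPeriod

variable {α : Type*} {w : ℕ → α} {i n : ℕ}

theorem isLocalPeriodAt_iff :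
    IsLocalPeriodAt w i n ↔ 1 ≤ n ∧ ∀ j < i, i ≤ j + n → w j = w (j + n) := by
  refine and_congr_right fun _ => ⟨?_, fun H => ?_⟩
  · rintro (⟨hni, H⟩ | ⟨-, H⟩) j hji hij
    · have h := H (j - (i - n)) (by omega)
      rw [show i + (j - (i - n)) = j + n by omega, show i - n + (j - (i - n)) = j by omega] at h
      exact h.symm
    · rw [H j hji, add_comm]
  · by_cases hni : n ≤ i
    · refine Or.inl ⟨hni, fun k hk => ?_⟩
      rw [H (i - n + k) (by omega) (by omega), show i - n + k + n = i + k by omega]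
    · exact Or.inr ⟨by omega, fun k hk => by rw [H k hk (by omega), add_comm]⟩

theorem IsLocalPeriodAt.one_le (h : IsLocalPeriodAt w i n) : 1 ≤ n := h.1

theorem isLocalPeriodAt_zero_one : IsLocalPeriodAt w 0 1 :=
  isLocalPeriodAt_iff.2 ⟨le_rfl, fun _ h => absurd h (Nat.not_lt_zero _)⟩

theorem isLocalPeriodAt_one_iff (hi : 1 ≤ i) : IsLocalPeriodAt w i 1 ↔ w (i - 1) = w i := by
  rw [isLocalPeriodAt_iff]
  refine ⟨fun ⟨_, H⟩ => ?_, fun h => ⟨le_rfl, fun j hji hij => ?_⟩⟩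
  · simpa [Nat.sub_add_cancel hi] using H (i - 1) (by omega) (by omega)
  · obtain rfl : j = i - 1 := by omega
    rwa [Nat.sub_add_cancel hi]

theorem perFn_le (h : IsLocalPeriodAt w i n) : perFn w i ≤ n := Nat.sInf_le h

theorem isLocalPeriodAt_perFn (h : ∃ n, IsLocalPeriodAt w i n) :
    IsLocalPeriodAt w i (perFn w i) := Nat.sInf_mem h

theorem perFn_eq_of_isLocalPeriodAt (h : IsLocalPeriodAt w i n)
    (hmin : ∀ m, IsLocalPeriodAt w i m → n ≤ m) : perFn w i = n :=
  (perFn_le h).antisymm (le_csInf ⟨n, h⟩ hmin)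

theorem perFn_zero : perFn w 0 = 1 :=
  perFn_eq_of_isLocalPeriodAt isLocalPeriodAt_zero_one fun _ h => h.one_le

theorem perFn_eq_one (hi : 1 ≤ i) (h : w (i - 1) = w i) : perFn w i = 1 :=
  perFn_eq_of_isLocalPeriodAt ((isLocalPeriodAt_one_iff hi).2 h) fun _ h => h.one_le

end LocalPeriod

theorem pd_le_one (i : ℕ) : pd i ≤ 1 := by unfold pd; split <;> omega

theorem pd_two_mul (k : ℕ) : pd (2 * k) = 0 := by
  simp [pd, Nat.factorization_eq_zero_of_not_dvd (show ¬ 2 ∣ 2 * k + 1 by omega)]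

theorem pd_zero : pd 0 = 0 := pd_two_mul 0

theorem pd_two_mul_add_one (k : ℕ) : pd (2 * k + 1) = 1 - pd k := by
  have h : (2 * k + 1 + 1).factorization 2 = (k + 1).factorization 2 + 1 := by
    rw [show 2 * k + 1 + 1 = 2 * (k + 1) by ring,
      Nat.factorization_mul two_ne_zero k.succ_ne_zero]
    simp [Nat.prime_two.factorization_self, add_comm]
  unfold pd
  by_cases hk : Odd ((k + 1).factorization 2) <;> simp [h, Nat.odd_add_one, hk]

theorem pd_one : pd 1 = 1 := by simpa [pd_zero] using pd_two_mul_add_one 0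

theorem pd_two_mul_add_one_eq_iff (a b : ℕ) :
    pd (2 * a + 1) = pd (2 * b + 1) ↔ pd a = pd b := by
  have := pd_le_one a
  have := pd_le_one b
  rw [pd_two_mul_add_one, pd_two_mul_add_one]; omega

theorem pd_add_one_eq_zero (t : ℕ) (h : pd t = 1) : pd (t + 1) = 0 := by
  obtain ⟨u, rfl | rfl⟩ := t.even_or_odd'
  · simp [pd_two_mul] at h
  · rw [show 2 * u + 1 + 1 = 2 * (u + 1) by ring, pd_two_mul]

theorem isLocalPeriodAt_pd_two_mul_iff (i m : ℕ) :
    IsLocalPeriodAt pd i (2 * m) ↔ IsLocalPeriodAt pd (i / 2) m := by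
  simp only [isLocalPeriodAt_iff]
  refine and_congr (by omega) ⟨fun H t ht hti => ?_, fun H j hji hij => ?_⟩
  · rw [← pd_two_mul_add_one_eq_iff, show 2 * (t + m) + 1 = 2 * t + 1 + 2 * m by ring]
    exact H _ (by omega) (by omega)
  · obtain ⟨t, rfl | rfl⟩ := j.even_or_odd'
    · rw [← mul_add, pd_two_mul, pd_two_mul]
    · rw [show 2 * t + 1 + 2 * m = 2 * (t + m) + 1 by ring, pd_two_mul_add_one_eq_iff]
      exact H t (by omega) (by omega)

/-- An odd shift matches positions of opposite parity; applied to two positions two apart in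
the window, where `pd` vanishes at the even ones, it forces a factor `11` in `pd`. -/
theorem not_isLocalPeriodAt_pd_two_mul_add_one {i s : ℕ} (hi : 2 ≤ i) (hs : 1 ≤ s) :
    ¬ IsLocalPeriodAt pd i (2 * s + 1) := by
  rw [isLocalPeriodAt_iff]
  rintro ⟨-, H⟩
  rcases Nat.lt_or_ge i 3 with hi3 | hi3
  · have h := H 1 (by omega) (by omega)
    rw [show 1 + (2 * s + 1) = 2 * (s + 1) by ring, pd_two_mul, pd_one] at h
    exact one_ne_zero h
  have h₀ := H (i - 3) (by omega) (by omega)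
  have h₂ := H (i - 1) (by omega) (by omega)
  obtain ⟨t, ht | ht⟩ := (i - 3).even_or_odd'
  · rw [ht, pd_two_mul, show 2 * t + (2 * s + 1) = 2 * (t + s) + 1 by ring,
      pd_two_mul_add_one] at h₀
    rw [show i - 1 = 2 * (t + 1) by omega, pd_two_mul,
      show 2 * (t + 1) + (2 * s + 1) = 2 * (t + s + 1) + 1 by ring, pd_two_mul_add_one] at h₂
    have := pd_add_one_eq_zero (t + s) (by have := pd_le_one (t + s); omega)
    omega
  · rw [ht, pd_two_mul_add_one, show 2 * t + 1 + (2 * s + 1) = 2 * (t + s + 1) by ring,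
      pd_two_mul] at h₀
    rw [show i - 1 = 2 * (t + 1) + 1 by omega, pd_two_mul_add_one,
      show 2 * (t + 1) + 1 + (2 * s + 1) = 2 * (t + s + 2) by ring, pd_two_mul] at h₂
    have := pd_add_one_eq_zero t (by have := pd_le_one t; omega)
    omega

theorem exists_isLocalPeriodAt_pd (i : ℕ) : ∃ n, IsLocalPeriodAt pd i n := by
  induction i using Nat.strong_induction_on with
  | _ i ih =>
    rcases Nat.eq_zero_or_pos i with rfl | hi
    · exact ⟨1, isLocalPeriodAt_zero_one⟩
    by_cases h : pd (i - 1) = pd i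
    · exact ⟨1, (isLocalPeriodAt_one_iff hi).2 h⟩
    · obtain ⟨m, hm⟩ := ih (i / 2) (by omega)
      exact ⟨2 * m, (isLocalPeriodAt_pd_two_mul_iff i m).2 hm⟩

theorem one_le_perFn_pd (i : ℕ) : 1 ≤ perFn pd i :=
  (isLocalPeriodAt_perFn (exists_isLocalPeriodAt_pd i)).one_le

theorem perFn_pd_of_ne {i : ℕ} (hi : 2 ≤ i) (h : pd (i - 1) ≠ pd i) :
    perFn pd i = 2 * perFn pd (i / 2) := by
  refine perFn_eq_of_isLocalPeriodAt ((isLocalPeriodAt_pd_two_mul_iff _ _).2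
    (isLocalPeriodAt_perFn (exists_isLocalPeriodAt_pd _))) fun q hq => ?_
  obtain ⟨m, rfl | rfl⟩ := q.even_or_odd'
  · exact Nat.mul_le_mul_left 2 (perFn_le ((isLocalPeriodAt_pd_two_mul_iff i m).1 hq))
  · rcases Nat.eq_zero_or_pos m with rfl | hm
    · exact absurd ((isLocalPeriodAt_one_iff (by omega)).1 hq) h
    · exact absurd hq (not_isLocalPeriodAt_pd_two_mul_add_one hi hm)

theorem perFn_pd_one : perFn pd 1 = 2 := by
  refine perFn_eq_of_isLocalPeriodAt
    ((isLocalPeriodAt_pd_two_mul_iff 1 1).2 isLocalPeriodAt_zero_one) fun q hq => ?_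
  have hq1 := hq.one_le
  have h : pd 0 ≠ pd 1 := by simp [pd_zero, pd_one]
  by_contra! hlt
  exact h ((isLocalPeriodAt_one_iff le_rfl).1 (by rwa [show q = 1 by omega] at hq))

theorem perFn_pd_two_mul {j : ℕ} (hj : 1 ≤ j) :
    perFn pd (2 * j) = if pd (j - 1) = 1 then 1 else 2 * perFn pd j := by
  have hodd : pd (2 * j - 1) = 1 - pd (j - 1) := by
    rw [show 2 * j - 1 = 2 * (j - 1) + 1 by omega, pd_two_mul_add_one]
  have := pd_le_one (j - 1)
  split_ifs with h
  · exact perFn_eq_one (by omega) (by rw [hodd, h, pd_two_mul])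
  · rw [perFn_pd_of_ne (by omega) (by rw [hodd, pd_two_mul]; omega),
      Nat.mul_div_cancel_left j two_pos]

theorem perFn_pd_two_mul_add_one (j : ℕ) :
    perFn pd (2 * j + 1) = if pd j = 1 then 1 else 2 * perFn pd j := by
  rcases Nat.eq_zero_or_pos j with rfl | hj
  · simp [pd_zero, perFn_pd_one, perFn_zero]
  have := pd_le_one j
  split_ifs with h
  · exact perFn_eq_one (by omega)
      (by rw [pd_two_mul_add_one, h, Nat.add_sub_cancel, pd_two_mul])
  · rw [perFn_pd_of_ne (by omega)
      (by rw [Nat.add_sub_cancel, pd_two_mul_add_one, pd_two_mul]; omega)]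
    congr 2; omega

theorem perFn_pd_two_mul_le (j : ℕ) : perFn pd (2 * j) ≤ 2 * perFn pd j := by
  rcases Nat.eq_zero_or_pos j with rfl | hj
  · simp [perFn_zero]
  rw [perFn_pd_two_mul hj]
  have := one_le_perFn_pd j
  split_ifs <;> omega

theorem perFn_pd_pair_bounds (j : ℕ) :
    2 * perFn pd j + 1 ≤ perFn pd (2 * j) + perFn pd (2 * j + 1) ∧
      perFn pd (2 * j) + perFn pd (2 * j + 1) ≤ 2 * perFn pd j + 2 := by
  rcases Nat.eq_zero_or_pos j with rfl | hj
  · simp [perFn_zero, perFn_pd_one]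
  rw [perFn_pd_two_mul hj, perFn_pd_two_mul_add_one]
  have := one_le_perFn_pd j
  have := pd_le_one j
  have := pd_le_one (j - 1)
  have hnot11 : pd (j - 1) = 1 → pd j = 0 := by
    simpa [Nat.sub_add_cancel hj] using pd_add_one_eq_zero (j - 1)
  have hper : pd (j - 1) = pd j → perFn pd j = 1 := perFn_eq_one hj
  split_ifs <;> omega

theorem sumFn_two_mul {α : Type*} (w : ℕ → α) (n : ℕ) :
    sumFn w (2 * n) = ∑ j ∈ range n, (perFn w (2 * j) + perFn w (2 * j + 1)) := by
  induction n with
  | zero => simp [sumFn]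
  | succ n ih =>
    rw [sum_range_succ, ← ih, sumFn, sumFn, show 2 * (n + 1) = 2 * n + 1 + 1 by ring,
      sum_range_succ, sum_range_succ, add_assoc]

theorem sumFn_succ {α : Type*} (w : ℕ → α) (n : ℕ) :
    sumFn w (n + 1) = sumFn w n + perFn w n :=
  sum_range_succ _ _

theorem sumFn_pd_two_mul_bounds (n : ℕ) :
    2 * sumFn pd n + n ≤ sumFn pd (2 * n) ∧ sumFn pd (2 * n) ≤ 2 * sumFn pd n + 2 * n := by
  have hS : 2 * sumFn pd n = ∑ j ∈ range n, 2 * perFn pd j := by rw [sumFn, mul_sum]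
  rw [sumFn_two_mul, hS]
  constructor
  · calc ∑ j ∈ range n, 2 * perFn pd j + n = ∑ j ∈ range n, (2 * perFn pd j + 1) := by
          simp [sum_add_distrib]
      _ ≤ _ := sum_le_sum fun j _ => (perFn_pd_pair_bounds j).1
  · calc _ ≤ ∑ j ∈ range n, (2 * perFn pd j + 2) :=
          sum_le_sum fun j _ => (perFn_pd_pair_bounds j).2
      _ = _ := by simp [sum_add_distrib, mul_comm]

theorem sumFn_pd_two_mul_add_one_bounds (n : ℕ) :
    2 * sumFn pd n + n + 1 ≤ sumFn pd (2 * n + 1) ∧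
      sumFn pd (2 * n + 1) ≤ 2 * sumFn pd (n + 1) + 2 * n := by
  rw [sumFn_succ, sumFn_succ]
  have := sumFn_pd_two_mul_bounds n
  have := one_le_perFn_pd (2 * n)
  have := perFn_pd_two_mul_le n
  omega

open Real

theorem logb_two_two_pow (k : ℕ) : logb 2 ((2 : ℝ) ^ k) = k := by
  rw [logb_pow, logb_self_eq_one one_lt_two, mul_one]

theorem logb_two_two_mul {x : ℝ} (hx : x ≠ 0) : logb 2 (2 * x) = 1 + logb 2 x := by
  rw [logb_mul two_ne_zero hx, logb_self_eq_one one_lt_two]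

theorem mul_logb_two_add_one_le {x : ℝ} (hx : 0 < x) :
    x * logb 2 (x + 1) ≤ x * logb 2 x + 2 := by
  have hlog2 : 1 / 2 < log 2 := by have := log_two_gt_d9; norm_num at this; linarith
  have hstep : x * (log (x + 1) - log x) ≤ 1 := by
    have h := log_le_sub_one_of_pos (show 0 < (x + 1) / x by positivity)
    rw [log_div (by positivity) hx.ne', div_sub_one hx.ne', add_sub_cancel_left] at h
    calc x * (log (x + 1) - log x) ≤ x * (1 / x) := by gcongr
      _ = 1 := by field_simp
  have hpos : 0 ≤ x * (log (x + 1) - log x) := by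
    have := log_le_log hx (by linarith : x ≤ x + 1)
    nlinarith
  have : x * logb 2 (x + 1) - x * logb 2 x = x * (log (x + 1) - log x) / log 2 := by
    simp only [logb]; ring
  rw [← sub_le_iff_le_add', this, div_le_iff₀ (by linarith)]
  nlinarith

section Recurrence

variable {S : ℕ → ℕ}

theorem add_le_mul_of_le_two_pow (h2 : S 2 ≤ 3) (heven : ∀ m, S (2 * m) ≤ 2 * S m + 2 * m)
    (hodd : ∀ m, S (2 * m + 1) ≤ 2 * S (m + 1) + 2 * m) :
    ∀ k n, 2 ≤ n → n ≤ 2 ^ k → S n + (k + 2) ≤ n * (k + 2) := by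
  intro k
  induction k with
  | zero => intro n hn hnk; rw [pow_zero] at hnk; omega
  | succ k ih =>
    intro n hn hnk
    rw [pow_succ] at hnk
    obtain ⟨m, rfl | rfl⟩ := n.even_or_odd'
    · rcases Nat.lt_or_ge m 2 with hm | hm
      · obtain rfl : m = 1 := by omega
        simp only [mul_one]
        omega
      · have := ih m hm (by omega)
        have := heven m
        nlinarith
    · have := ih (m + 1) (by omega) (by omega)
      have := hodd m
      nlinarith

theorem logb_lower_bound_of_recurrence (h1 : 1 ≤ S 1) (heven : ∀ m, 2 * S m + m ≤ S (2 * m))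
    (hodd : ∀ m, 2 * S m + m + 1 ≤ S (2 * m + 1)) :
    ∀ n : ℕ, 1 ≤ n → ((1 / 3 : ℝ) * logb 2 n - 1 / 18) * n + 4 / 9 ≤ S n := by
  intro n
  induction n using Nat.strong_induction_on with
  | _ n ih =>
    intro hn
    obtain ⟨m, rfl | rfl⟩ := n.even_or_odd'
    · have ih := ih m (by omega) (by omega)
      have hS : (2 * S m + m : ℝ) ≤ S (2 * m) := by exact_mod_cast heven m
      have hm : (1 : ℝ) ≤ m := by exact_mod_cast (by omega : 1 ≤ m)
      push_cast
      rw [logb_two_two_mul (by positivity)]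
      nlinarith
    rcases Nat.eq_zero_or_pos m with rfl | hm
    · have : (1 : ℝ) ≤ S 1 := by exact_mod_cast h1
      simp only [Nat.mul_zero, Nat.zero_add, Nat.cast_one, logb_one]
      linarith
    have ih := ih m (by omega) hm
    have hS : (2 * S m + m + 1 : ℝ) ≤ S (2 * m + 1) := by exact_mod_cast hodd m
    have hm : (1 : ℝ) ≤ m := by exact_mod_cast hm
    have hshift := mul_logb_two_add_one_le (show (0 : ℝ) < 2 * m by positivity)
    rw [logb_two_two_mul (by positivity)] at hshift
    have hlog : logb 2 (2 * m + 1 : ℝ) ≤ m + 1 := by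
      have h := Nat.lt_two_pow_self (n := m)
      rw [← Nat.cast_succ, ← logb_two_two_pow (m + 1),
        logb_le_logb one_lt_two (by positivity) (by positivity)]
      exact_mod_cast (by rw [pow_succ]; omega : 2 * m + 1 ≤ 2 ^ (m + 1))
    push_cast
    nlinarith

theorem logb_upper_bound_of_recurrence (h1 : S 1 ≤ 3) (h2 : S 2 ≤ 3)
    (heven : ∀ m, S (2 * m) ≤ 2 * S m + 2 * m)
    (hodd : ∀ m, S (2 * m + 1) ≤ 2 * S (m + 1) + 2 * m) :
    ∀ n : ℕ, 1 ≤ n → (S n : ℝ) ≤ ((4 / 3 : ℝ) * logb 2 n + 22 / 9) * n + 5 / 9 := by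
  intro n hn
  rcases hn.eq_or_lt with rfl | hn
  · have : (S 1 : ℝ) ≤ 3 := by exact_mod_cast h1
    simp only [Nat.cast_one, logb_one]
    linarith
  set k := Nat.clog 2 n
  have hk : 1 ≤ k := Nat.clog_pos one_lt_two hn
  have hS : (S n + (k + 2) : ℝ) ≤ n * (k + 2) := by
    exact_mod_cast add_le_mul_of_le_two_pow h2 heven hodd k n hn (Nat.le_pow_clog one_lt_two n)
  have hlow : (k : ℝ) - 1 < logb 2 n := by
    have h := Nat.pow_pred_clog_lt_self one_lt_two hn
    rw [← Nat.sub_one] at h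
    have := logb_lt_logb one_lt_two (by positivity)
      (show ((2 ^ (k - 1) : ℕ) : ℝ) < n by exact_mod_cast h)
    rwa [Nat.cast_pow, Nat.cast_ofNat, logb_two_two_pow, Nat.cast_sub hk, Nat.cast_one] at this
  have hn2 : (2 : ℝ) ≤ n := by exact_mod_cast hn
  have hL : 0 ≤ logb 2 (n : ℝ) := logb_nonneg one_lt_two (by linarith)
  rcases Nat.lt_or_ge k 3 with hk3 | hk3
  · have : (n : ℝ) ≤ 4 := by
      have := Nat.le_pow_clog one_lt_two n
      exact_mod_cast this.trans (Nat.pow_le_pow_right two_pos (by omega : k ≤ 2))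
    nlinarith
  · have : (3 : ℝ) ≤ k := by exact_mod_cast hk3
    nlinarith

end Recurrence

theorem pd_sumFn_bounds (n : ℕ) (hn : 1 ≤ n) :
    ((1 / 3 : ℝ) * Real.logb 2 n - 1 / 18) * (n : ℝ) + 4 / 9 ≤ (sumFn pd n : ℝ) ∧
      (sumFn pd n : ℝ) ≤ ((4 / 3 : ℝ) * Real.logb 2 n + 22 / 9) * (n : ℝ) + 5 / 9 := by
  have h1 : sumFn pd 1 = 1 := by simp [sumFn, perFn_zero]
  have h2 : sumFn pd 2 = 3 := by simp [sumFn, sum_range_succ, perFn_zero, perFn_pd_one]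
  exact ⟨logb_lower_bound_of_recurrence h1.ge (fun m => (sumFn_pd_two_mul_bounds m).1)
      (fun m => (sumFn_pd_two_mul_add_one_bounds m).1) n hn,
    logb_upper_bound_of_recurrence (by omega) h2.le (fun m => (sumFn_pd_two_mul_bounds m).2)
      (fun m => (sumFn_pd_two_mul_add_one_bounds m).2) n hn⟩
end
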